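/- In W̃ of type A₂ with the diagram automorphism δ (δ(s₁) = s₂, δ(s₂) = s₁, δ(s₀) = s₀), the δ-conjugacy class 𝕆_{1,δ} containing the simple reflection s₁ has minimal length 1, and within W_a it contains all elements of the form t^λ s₁ and t^λ s₂ for λ ∈ Q. -/

import Mathlib

namespace A2

/-- Bundled data for the extended affine Weyl group `W̃ = P ⋊ W` of type `A₂` (for `PGL₃`),
presented as `W̃ = W_a ⋊ Ω` with simple reflections `s0, s1, s2`, length-zero element `tau`
generating `Ω ≅ ℤ/3`, translations `t (m, n) = t^(m α₁ + n α₂)` for coroot-lattice elements,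
and the Iwahori–Matsumoto length function `len`. -/
class A2Data (G : Type*) [Group G] where
  s0 : G
  s1 : G
  s2 : G
  tau : G
  t : ℤ × ℤ → G
  len : G → ℕ
  s0_sq : s0 * s0 = 1
  s1_sq : s1 * s1 = 1
  s2_sq : s2 * s2 = 1
  braid01 : (s0 * s1) ^ 3 = 1
  braid12 : (s1 * s2) ^ 3 = 1
  braid02 : (s0 * s2) ^ 3 = 1
  tau_cube : tau ^ 3 = 1
  tau_s0 : tau * s0 * tau⁻¹ = s1
  tau_s1 : tau * s1 * tau⁻¹ = s2
  tau_s2 : tau * s2 * tau⁻¹ = s0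
  t_add : ∀ a b : ℤ × ℤ, t (a + b) = t a * t b
  s1_t : ∀ m n : ℤ, s1 * t (m, n) * s1⁻¹ = t (n - m, n)
  s2_t : ∀ m n : ℤ, s2 * t (m, n) * s2⁻¹ = t (m, m - n)
  tau_t : ∀ m n : ℤ, tau * t (m, n) * tau⁻¹ = t (-n, m - n)
  s0_def : s0 = t (1, 1) * (s1 * s2 * s1)
  decomp : ∀ g : G, ∃ (m n : ℤ) (w : G) (j : Fin 3),
    w ∈ ({1, s1, s2, s1 * s2, s2 * s1, s1 * s2 * s1} : Set G) ∧
    g = t (m, n) * w * tau ^ (j : ℕ)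
  len_t : ∀ m n : ℤ,
    len (t (m, n)) = (2*m - n).natAbs + (2*n - m).natAbs + (m + n).natAbs
  len_t_s1 : ∀ m n : ℤ,
    len (t (m, n) * s1) = (2*m - n - 1).natAbs + (2*n - m).natAbs + (m + n).natAbs
  len_t_s2 : ∀ m n : ℤ,
    len (t (m, n) * s2) = (2*m - n).natAbs + (2*n - m - 1).natAbs + (m + n).natAbs
  len_t_s1s2 : ∀ m n : ℤ,
    len (t (m, n) * (s1 * s2)) =
      (2*m - n - 1).natAbs + (2*n - m).natAbs + (m + n - 1).natAbs
  len_t_s2s1 : ∀ m n : ℤ,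
    len (t (m, n) * (s2 * s1)) =
      (2*m - n).natAbs + (2*n - m - 1).natAbs + (m + n - 1).natAbs
  len_t_s1s2s1 : ∀ m n : ℤ,
    len (t (m, n) * (s1 * s2 * s1)) =
      (2*m - n - 1).natAbs + (2*n - m - 1).natAbs + (m + n - 1).natAbs
  len_mul_tau : ∀ g : G, len (g * tau) = len g
  len_tau_mul : ∀ g : G, len (tau * g) = len g

namespace A2Data

variable {G : Type*} [Group G] [A2Data G]

/-- The affine Weyl group `W_a`, the subgroup generated by the simple reflections. -/
def Wa (G : Type*) [Group G] [A2Data G] : Subgroup G :=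
  Subgroup.closure {s0, s1, s2}

/-- `y` is `W̃`-conjugate to `x`. -/
def ConjTo (x y : G) : Prop := ∃ g : G, g * x * g⁻¹ = y

/-- The `W̃`-conjugacy class of `x`. -/
def conjClass (x : G) : Set G := {y | ConjTo x y}

def IsConjClass (S : Set G) : Prop := ∃ x : G, S = conjClass x

/-- `n` is the minimal length of an element of `S`, attained on `S`. -/
def IsMinLen (S : Set G) (n : ℕ) : Prop :=
  (∃ x ∈ S, len x = n) ∧ ∀ x ∈ S, n ≤ len x

/-- The set of simple affine reflections. -/
def simples (G : Type*) [Group G] [A2Data G] : Set G := {s0, s1, s2}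

/-- The class `𝕆₁ = {t^{kα₁}s₁, t^{kα₂}s₂, t^{k(α₁+α₂)}s₁s₂s₁ : k ∈ ℤ}`. -/
def O1set (G : Type*) [Group G] [A2Data G] : Set G :=
  {x | ∃ k : ℤ, x = t (k, 0) * s1 ∨ x = t (0, k) * s2 ∨ x = t (k, k) * (s1 * s2 * s1)}

/-- The class `𝕆₂ = {t^λ s₁s₂, t^λ s₂s₁ : λ ∈ Q}`. -/
def O2set (G : Type*) [Group G] [A2Data G] : Set G :=
  {x | ∃ m n : ℤ, x = t (m, n) * (s1 * s2) ∨ x = t (m, n) * (s2 * s1)}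

/-- `C_i = {t^{kα₁+iα₂}s₁, t^{-iα₁+kα₂}s₂, t^{kα₁+(k-i)α₂}s₁s₂s₁ : k ∈ ℤ}`. -/
def Ciset (G : Type*) [Group G] [A2Data G] (i : ℤ) : Set G :=
  {x | ∃ k : ℤ, x = t (k, i) * s1 ∨ x = t (-i, k) * s2 ∨ x = t (k, k - i) * (s1 * s2 * s1)}

/-- `C'_i = {t^{kα₁-iα₂}s₁, t^{iα₁+kα₂}s₂, t^{(k-i)α₁+kα₂}s₁s₂s₁ : k ∈ ℤ}`. -/
def Ci'set (G : Type*) [Group G] [A2Data G] (i : ℤ) : Set G :=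
  {x | ∃ k : ℤ, x = t (k, -i) * s1 ∨ x = t (i, k) * s2 ∨ x = t (k - i, k) * (s1 * s2 * s1)}

/-- `𝕆_{id,τ} = {t^{mα₁+nα₂}τ, t^{mα₁+nα₂}s₁s₂τ : m, n ∈ ℤ}`. -/
def OIdtau (G : Type*) [Group G] [A2Data G] : Set G :=
  {x | ∃ m n : ℤ, x = t (m, n) * tau ∨ x = t (m, n) * (s1 * s2) * tau}

/-- `𝕆_{i,τ} = {t^{kα₁+iα₂}s₁s₂s₁τ, t^{(k+i-1)α₁+kα₂}s₂τ, t^{(1-i)α₁+kα₂}s₁τ : k ∈ ℤ}`. -/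
def Oitau (G : Type*) [Group G] [A2Data G] (i : ℤ) : Set G :=
  {x | ∃ k : ℤ, x = t (k, i) * (s1 * s2 * s1) * tau ∨ x = t (k + i - 1, k) * s2 * tau ∨
    x = t (1 - i, k) * s1 * tau}

/-- One non-length-increasing conjugation step by a simple reflection. -/
def StepTo (x y : G) : Prop :=
  ∃ s ∈ simples G, y = s * x * s ∧ len y ≤ len x

def RedTo : G → G → Prop := Relation.ReflTransGen StepTo

/-- The relation `≈` of the He–Nie reduction method. -/
def Approx (x y : G) : Prop := RedTo x y ∧ RedTo y x

/-- `f` satisfies the defining reduction recursion for the class polynomials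
`f_{w̃,𝕆}`, written as polynomials in the variable `X = v - v⁻¹`. -/
def ClassPolySystem (f : G → Set G → Polynomial ℤ) : Prop :=
  (∀ x : G, (∀ y : G, ConjTo x y → len x ≤ len y) →
    ∀ O : Set G, IsConjClass O → (x ∈ O → f x O = 1) ∧ (x ∉ O → f x O = 0)) ∧
  (∀ x x1 s : G, (∃ y : G, ConjTo x y ∧ len y < len x) →
    Approx x x1 → s ∈ simples G → len (s * x1 * s) < len x1 → len x1 = len x →
    ∀ O : Set G, f x O = Polynomial.X * f (s * x1) O + f (s * x1 * s) O)

/-- `y` is `δ`-conjugate to `x`. -/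
def DConjTo (δ : G ≃* G) (x y : G) : Prop := ∃ g : G, g * x * (δ g)⁻¹ = y

def dConjClass (δ : G ≃* G) (x : G) : Set G := {y | DConjTo δ x y}

def IsDConjClass (δ : G ≃* G) (S : Set G) : Prop := ∃ x : G, S = dConjClass δ x

def DStepTo (δ : G ≃* G) (x y : G) : Prop :=
  ∃ s ∈ simples G, y = s * x * (δ s)⁻¹ ∧ len y ≤ len x

def DRedTo (δ : G ≃* G) : G → G → Prop := Relation.ReflTransGen (DStepTo δ)

def DApprox (δ : G ≃* G) (x y : G) : Prop := DRedTo δ x y ∧ DRedTo δ y x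

/-- `f` satisfies the `δ`-twisted reduction recursion for the class polynomials
`f_{w̃,𝕆}`, written as polynomials in `X = v - v⁻¹`. -/
def DClassPolySystem (δ : G ≃* G) (f : G → Set G → Polynomial ℤ) : Prop :=
  (∀ x : G, (∀ y : G, DConjTo δ x y → len x ≤ len y) →
    ∀ O : Set G, IsDConjClass δ O → (x ∈ O → f x O = 1) ∧ (x ∉ O → f x O = 0)) ∧
  (∀ x x1 s : G, (∃ y : G, DConjTo δ x y ∧ len y < len x) →
    DApprox δ x x1 → s ∈ simples G → len (s * x1 * (δ s)⁻¹) < len x1 → len x1 = len x →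
    ∀ O : Set G, f x O = Polynomial.X * f (s * x1) O + f (s * x1 * (δ s)⁻¹) O)

/-- The diagram automorphism `δ` of `W̃` of type `A₂`: it fixes `s0`, swaps `s1` and
`s2`, inverts `tau`, swaps the coroot coordinates, and preserves lengths. -/
def IsDiagramAut (δ : G ≃* G) : Prop :=
  δ s0 = s0 ∧ δ s1 = s2 ∧ δ s2 = s1 ∧ δ tau = tau⁻¹ ∧
  (∀ m n : ℤ, δ (t (m, n)) = t (n, m)) ∧ ∀ g : G, len (δ g) = len g

/-- Elementary strong conjugation. -/
def ElemStrongConj (x y : G) : Prop :=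
  len x = len y ∧ ∃ g : G, y = g * x * g⁻¹ ∧
    (len (g * x) = len g + len x ∨ len (x * g⁻¹) = len g + len x)

/-- Strong conjugation: a chain of elementary strong conjugations. -/
def StrongConj : G → G → Prop := Relation.ReflTransGen ElemStrongConj

end A2Data

open A2Data

/-- The affine Hecke algebra attached to `W̃`, over `A = ℤ[v, v⁻¹]`, with standard
basis `T` and the quadratic and braid-type multiplication relations. -/
class HeckeData (G : Type*) [Group G] [A2Data G] (H : Type*) [Ring H]
    [Algebra (LaurentPolynomial ℤ) H] where
  T : G → H
  T_one : T 1 = 1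
  T_mul : ∀ x y : G, len (x * y) = len x + len y → T x * T y = T (x * y)
  T_quad : ∀ s ∈ simples G,
    (T s - algebraMap (LaurentPolynomial ℤ) H (LaurentPolynomial.T 1)) *
      (T s + algebraMap (LaurentPolynomial ℤ) H (LaurentPolynomial.T (-1))) = 0

/-- The commutator `ℤ[v,v⁻¹]`-submodule `[H̃, H̃]`. -/
noncomputable def commSub (H : Type*) [Ring H] [Algebra (LaurentPolynomial ℤ) H] :
    Submodule (LaurentPolynomial ℤ) H :=
  Submodule.span (LaurentPolynomial ℤ) {z : H | ∃ a b : H, z = a * b - b * a}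

/-- The `δ`-twisted commutator `ℤ[v,v⁻¹]`-submodule `[H̃, H̃]_δ`. -/
noncomputable def dCommSub {H : Type*} [Ring H] [Algebra (LaurentPolynomial ℤ) H]
    (δH : H →ₐ[LaurentPolynomial ℤ] H) : Submodule (LaurentPolynomial ℤ) H :=
  Submodule.span (LaurentPolynomial ℤ) {z : H | ∃ a b : H, z = a * b - b * (δH a)}

end A2

/-!
A `δ`-conjugate `g s₁ δ(g)⁻¹` of `s₁` has a normal form `t^λ w τ^k` whose finite part `w`
is one of the odd elements `s₁, s₂, s₁s₂s₁`: writing `g = t^μ w' τ^j` and commuting every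
translation to the left and every `τ` to the right, the computation is finite. By the explicit
length formulas such an element is never of length `0`. Conversely `t^λ s₁` and `t^λ s₂` are
reached from `s₁` by `δ`-conjugating with a translation, resp. with `s₁` and a translation.
-/

namespace A2.A2Data

variable {G : Type*} [Group G] [A2Data G]

lemma t_zero : (t (0, 0) : G) = 1 := by
  simpa using t_add (G := G) (0, 0) (0, 0)

lemma t_mul_t (a b : ℤ × ℤ) : (t a : G) * t b = t (a + b) := (t_add a b).symm

lemma t_mul_t_mul (a b : ℤ × ℤ) (x : G) : (t a : G) * (t b * x) = t (a + b) * x := by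
  rw [← mul_assoc, t_mul_t]

lemma t_inv (m n : ℤ) : (t (m, n) : G)⁻¹ = t (-m, -n) :=
  inv_eq_of_mul_eq_one_right <| by simp [t_mul_t, t_zero]

lemma s1_inv : (s1 : G)⁻¹ = s1 := inv_eq_of_mul_eq_one_right s1_sq
lemma s2_inv : (s2 : G)⁻¹ = s2 := inv_eq_of_mul_eq_one_right s2_sq

lemma s1_mul_s1_mul (x : G) : (s1 : G) * (s1 * x) = x := by rw [← mul_assoc, s1_sq, one_mul]
lemma s2_mul_s2_mul (x : G) : (s2 : G) * (s2 * x) = x := by rw [← mul_assoc, s2_sq, one_mul]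

lemma s2_mul_s1_mul_s2 : (s2 : G) * (s1 * s2) = s1 * (s2 * s1) := by
  have h : ((s1 : G) * s2) * (s1 * s2) = (s1 * s2)⁻¹ :=
    eq_inv_of_mul_eq_one_left (by simpa [pow_succ, mul_assoc] using braid12 (G := G))
  rw [mul_inv_rev, s1_inv, s2_inv] at h
  rw [← s1_mul_s1_mul (s2 * (s1 * s2)), ← h]
  simp only [mul_assoc]

lemma s2_mul_s1_mul_s2_mul (x : G) : (s2 : G) * (s1 * (s2 * x)) = s1 * (s2 * (s1 * x)) := by
  simp only [← mul_assoc]; rw [mul_assoc s2, s2_mul_s1_mul_s2, ← mul_assoc]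

lemma tau_mul_tau_mul_tau : (tau : G) * (tau * tau) = 1 := by
  simpa [pow_succ, mul_assoc] using tau_cube (G := G)

lemma s1_mul_t (m n : ℤ) : (s1 : G) * t (m, n) = t (n - m, n) * s1 :=
  mul_inv_eq_iff_eq_mul.mp (s1_t m n)

lemma s2_mul_t (m n : ℤ) : (s2 : G) * t (m, n) = t (m, m - n) * s2 :=
  mul_inv_eq_iff_eq_mul.mp (s2_t m n)

lemma tau_mul_t (m n : ℤ) : (tau : G) * t (m, n) = t (-n, m - n) * tau :=
  mul_inv_eq_iff_eq_mul.mp (tau_t m n)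

lemma tau_mul_s1 : (tau : G) * s1 = s2 * tau := mul_inv_eq_iff_eq_mul.mp tau_s1
lemma tau_mul_s2 : (tau : G) * s2 = s0 * tau := mul_inv_eq_iff_eq_mul.mp tau_s2

lemma s1_mul_t_mul (m n : ℤ) (x : G) : (s1 : G) * (t (m, n) * x) = t (n - m, n) * (s1 * x) := by
  rw [← mul_assoc, s1_mul_t, mul_assoc]

lemma s2_mul_t_mul (m n : ℤ) (x : G) : (s2 : G) * (t (m, n) * x) = t (m, m - n) * (s2 * x) := by
  rw [← mul_assoc, s2_mul_t, mul_assoc]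

lemma tau_mul_t_mul (m n : ℤ) (x : G) :
    (tau : G) * (t (m, n) * x) = t (-n, m - n) * (tau * x) := by
  rw [← mul_assoc, tau_mul_t, mul_assoc]

lemma tau_mul_s1_mul (x : G) : (tau : G) * (s1 * x) = s2 * (tau * x) := by
  rw [← mul_assoc, tau_mul_s1, mul_assoc]

lemma tau_mul_s2_mul (x : G) : (tau : G) * (s2 * x) = s0 * (tau * x) := by
  rw [← mul_assoc, tau_mul_s2, mul_assoc]

lemma one_le_len_t_mul_s1 (m n : ℤ) : 1 ≤ len ((t (m, n) : G) * s1) := by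
  rw [len_t_s1]; omega

lemma one_le_len_t_mul_s2 (m n : ℤ) : 1 ≤ len ((t (m, n) : G) * s2) := by
  rw [len_t_s2]; omega

lemma one_le_len_t_mul_s1_mul_s2_mul_s1 (m n : ℤ) :
    1 ≤ len ((t (m, n) : G) * s1 * s2 * s1) := by
  rw [mul_assoc _ s1, mul_assoc, len_t_s1s2s1]; omega

lemma len_s1 : len (s1 : G) = 1 := by
  simpa [t_zero] using len_t_s1 (G := G) 0 0

lemma one_le_len_of_mem_dConjClass_s1 {δ : G ≃* G} (hδ : IsDiagramAut δ) {x : G}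
    (hx : x ∈ dConjClass δ (s1 : G)) : 1 ≤ len x := by
  obtain ⟨-, hδ1, hδ2, hδτ, hδt, -⟩ := hδ
  obtain ⟨g, rfl⟩ := hx
  obtain ⟨m, n, w, j, hw, rfl⟩ := decomp g
  simp only [Set.mem_insert_iff, Set.mem_singleton_iff] at hw
  fin_cases j <;> rcases hw with rfl | rfl | rfl | rfl | rfl | rfl <;>
    simp only [pow_zero, pow_succ, map_mul, hδt, hδ1, hδ2, hδτ, mul_inv_rev, inv_inv, t_inv,
      s1_inv, s2_inv, mul_one, one_mul, mul_assoc, s0_def,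
      s1_mul_t_mul, s2_mul_t_mul, tau_mul_t_mul, s1_mul_t, s2_mul_t, tau_mul_t,
      tau_mul_s1_mul, tau_mul_s2_mul, tau_mul_s1, tau_mul_s2, s1_mul_s1_mul, s2_mul_s2_mul,
      s1_sq, s2_sq, s2_mul_s1_mul_s2_mul, s2_mul_s1_mul_s2, tau_mul_tau_mul_tau, t_mul_t_mul,
      Prod.mk_add_mk] <;>
    (try simp only [← mul_assoc, len_mul_tau]) <;>
    first
      | apply one_le_len_t_mul_s1
      | apply one_le_len_t_mul_s2
      | apply one_le_len_t_mul_s1_mul_s2_mul_s1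

lemma t_mul_s1_mem_dConjClass {δ : G ≃* G} (hδ : IsDiagramAut δ) (m n : ℤ) :
    t (m, n) * s1 ∈ dConjClass δ (s1 : G) := by
  obtain ⟨-, -, -, -, hδt, -⟩ := hδ
  refine ⟨t (m - n, m), ?_⟩
  rw [hδt, t_inv, mul_assoc, s1_mul_t, ← mul_assoc, t_mul_t, Prod.mk_add_mk]
  congr 3 <;> ring

lemma t_mul_s2_mem_dConjClass {δ : G ≃* G} (hδ : IsDiagramAut δ) (m n : ℤ) :
    t (m, n) * s2 ∈ dConjClass δ (s1 : G) := by
  obtain ⟨-, hδ1, -, -, hδt, -⟩ := hδ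
  refine ⟨t (n, n - m) * s1, ?_⟩
  rw [map_mul, hδt, hδ1, mul_inv_rev, s2_inv, t_inv, mul_assoc (t _), s1_sq,
    mul_one, ← mul_assoc, mul_assoc (t _), s2_mul_t, ← mul_assoc, t_mul_t, Prod.mk_add_mk]
  congr 3 <;> ring

end A2.A2Data

open A2 A2Data in
/-- The `δ`-conjugacy class `𝕆_{1,δ}` of `s₁` has minimal length 1 and contains all
elements `t^λ s₁` and `t^λ s₂` for `λ ∈ Q`. -/
theorem statement_7 {G : Type*} [Group G] [A2Data G] (δ : G ≃* G)
    (hδ : IsDiagramAut δ) :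
    IsMinLen (dConjClass δ (s1 : G)) 1 ∧
    ∀ m n : ℤ, t (m, n) * s1 ∈ dConjClass δ (s1 : G) ∧
      t (m, n) * s2 ∈ dConjClass δ (s1 : G) :=
  ⟨⟨⟨s1, ⟨1, by simp⟩, len_s1⟩, fun _ hx => one_le_len_of_mem_dConjClass_s1 hδ hx⟩,
    fun m n => ⟨t_mul_s1_mem_dConjClass hδ m n, t_mul_s2_mem_dConjClass hδ m n⟩⟩
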